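/- Let N=(E',r_N) be a one-dimensional extension of a q-matroid M=(E,r_M). For each one-dimensional subspace e of E' not contained in E, set μ_N(e) = {F ∈ F_M : F + e is a flat of N and r_N(F + e) = r_N(F)}. Then each μ_N(e) is a modular cut of M, and μ_N satisfies property (QM): for all one-dimensional subspaces e1, e2 of E' not contained in E and every F ∈ μ_N(e1), one has F + e1 = F + e2 if and only if F ∈ μ_N(e2). -/
import Mathlib

open Module Submodule

variable {K V V₁ V₂ : Type*}

section Defs

variable [Field K] [AddCommGroup V] [Module K V]

/-- A one-dimensional subspace. -/
def OneDim (x : Submodule K V) : Prop := Module.finrank K x = 1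

/-- The q-matroid rank axioms (R1), (R2), (R3) for a rank function on the
lattice of subspaces of `V`. -/
def IsQMatroid (r : Submodule K V → ℕ) : Prop :=
  (∀ X : Submodule K V, r X ≤ Module.finrank K X) ∧
  (∀ X Y : Submodule K V, X ≤ Y → r X ≤ r Y) ∧
  (∀ X Y : Submodule K V, r (X ⊔ Y) + r (X ⊓ Y) ≤ r X + r Y)

/-- The closure of `X`: the sum of all one-dimensional subspaces `x`
with `r (X + x) = r X`. -/
def qcl (r : Submodule K V → ℕ) (X : Submodule K V) : Submodule K V :=
  sSup {x : Submodule K V | OneDim x ∧ r (X ⊔ x) = r X}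

/-- `F` is a flat: adding any one-dimensional subspace not contained in `F`
increases the rank. -/
def IsFlat (r : Submodule K V → ℕ) (F : Submodule K V) : Prop :=
  ∀ x : Submodule K V, OneDim x → ¬ x ≤ F → r F < r (F ⊔ x)

/-- `(F₁, F₂)` is a modular pair. -/
def ModularPair (r : Submodule K V → ℕ) (F₁ F₂ : Submodule K V) : Prop :=
  r (F₁ ⊔ F₂) + r (F₁ ⊓ F₂) = r F₁ + r F₂

/-- A modular cut: a collection of flats satisfying (M1) and (M2). -/
def IsModularCut (r : Submodule K V → ℕ) (M : Set (Submodule K V)) : Prop :=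
  (∀ F ∈ M, IsFlat r F) ∧
  (∀ F ∈ M, ∀ F' : Submodule K V, IsFlat r F' → F ≤ F' → F' ∈ M) ∧
  (∀ F₁ ∈ M, ∀ F₂ ∈ M, ModularPair r F₁ F₂ → F₁ ⊓ F₂ ∈ M)

/-- `Δ_q(V, W)`: the set of one-dimensional subspaces of `V` not contained
in the subspace `W`. -/
def Delta (W : Submodule K V) : Set (Submodule K V) :=
  {e : Submodule K V | OneDim e ∧ ¬ e ≤ W}

/-- A modular cut selector for a q-matroid `rM` on `W` (with respect to the
ambient space `V`): every value is a modular cut, and property (QM) holds. -/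
def IsMCS (W : Submodule K V) (rM : Submodule K ↥W → ℕ)
    (μ : Delta W → Set (Submodule K ↥W)) : Prop :=
  (∀ e : Delta W, IsModularCut rM (μ e)) ∧
  (∀ e₁ e₂ : Delta W, ∀ F ∈ μ e₁,
    (Submodule.map W.subtype F ⊔ (e₁ : Submodule K V) =
      Submodule.map W.subtype F ⊔ (e₂ : Submodule K V) ↔ F ∈ μ e₂))

/-- `B` is a basis of the q-matroid with rank function `r`:
`r B = dim B = r ⊤`. -/
def IsBasisOf (r : Submodule K V → ℕ) (B : Submodule K V) : Prop :=
  r B = Module.finrank K B ∧ Module.finrank K B = r ⊤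

end Defs

section Helpers

variable [Field K] [AddCommGroup V] [Module K V]

/-- A one-dimensional subspace is the span of a nonzero vector. -/
lemma onedim_exists {x : Submodule K V} (h : OneDim x) :
    ∃ v : V, v ≠ 0 ∧ x = Submodule.span K {v} := by
  obtain ⟨⟨v, hv⟩, hv0, hspan⟩ := finrank_eq_one_iff'.mp h
  refine ⟨v, ?_, le_antisymm ?_ ?_⟩
  · simpa [Submodule.mk_eq_zero] using hv0
  · intro w hw
    rcases hspan ⟨w, hw⟩ with ⟨c, hc⟩
    have : c • v = w := congrArg Subtype.val hc
    exact this ▸ Submodule.smul_mem _ c (Submodule.mem_span_singleton_self v)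
  · exact Submodule.span_le.mpr (by simpa using hv)

/-- If adjoining `x` to `X` does not increase rank, the same holds for any
larger subspace `Y`. -/
lemma rank_sup_eq_of_le {r : Submodule K V → ℕ} (hr : IsQMatroid r)
    {X Y x : Submodule K V} (hXY : X ≤ Y) (h : r (X ⊔ x) = r X) :
    r (Y ⊔ x) = r Y := by
  have h1 := hr.2.2 Y (X ⊔ x)
  have h2 : Y ⊔ (X ⊔ x) = Y ⊔ x := by rw [← sup_assoc, sup_eq_left.mpr hXY]
  rw [h2, h] at h1
  have h3 : r X ≤ r (Y ⊓ (X ⊔ x)) := hr.2.1 _ _ (le_inf hXY le_sup_left)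
  have h4 : r Y ≤ r (Y ⊔ x) := hr.2.1 _ _ le_sup_left
  omega

/-- The intersection of two flats is a flat. -/
lemma isFlat_inf {r : Submodule K V → ℕ} (hr : IsQMatroid r)
    {F₁ F₂ : Submodule K V} (h₁ : IsFlat r F₁) (h₂ : IsFlat r F₂) :
    IsFlat r (F₁ ⊓ F₂) := by
  intro x hx hxle
  by_contra hcon
  push_neg at hcon
  have heq : r ((F₁ ⊓ F₂) ⊔ x) = r (F₁ ⊓ F₂) :=
    le_antisymm hcon (hr.2.1 _ _ le_sup_left)
  have e1 : r (F₁ ⊔ x) = r F₁ := rank_sup_eq_of_le hr inf_le_left heq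
  have e2 : r (F₂ ⊔ x) = r F₂ := rank_sup_eq_of_le hr inf_le_right heq
  have hx1 : x ≤ F₁ := by
    by_contra h; exact absurd e1 (ne_of_gt (h₁ x hx h))
  have hx2 : x ≤ F₂ := by
    by_contra h; exact absurd e2 (ne_of_gt (h₂ x hx h))
  exact hxle (le_inf hx1 hx2)

end Helpers

/-- for a one-dimensional extension `rN` of the q-matroid `rM`,
each `μ_N e` is a modular cut of `rM` and `μ_N` satisfies (QM); i.e. `μ_N`
is a modular cut selector. -/
theorem stmt3 [Field K] [Fintype K] [AddCommGroup V] [Module K V] [FiniteDimensional K V]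
    (W : Submodule K V) (hdim : Module.finrank K V = Module.finrank K ↥W + 1)
    (rM : Submodule K ↥W → ℕ) (hM : IsQMatroid rM)
    (rN : Submodule K V → ℕ) (hN : IsQMatroid rN)
    (hrest : ∀ X : Submodule K ↥W, rN (Submodule.map W.subtype X) = rM X)
    (μ : Delta W → Set (Submodule K ↥W))
    (hμ : ∀ e : Delta W, μ e = {F : Submodule K ↥W | IsFlat rM F ∧
      IsFlat rN (Submodule.map W.subtype F ⊔ (e : Submodule K V)) ∧
      rN (Submodule.map W.subtype F ⊔ (e : Submodule K V)) =
        rN (Submodule.map W.subtype F)}) :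
    IsMCS W rM μ := by
  -- `W` together with any line outside of it spans `V`.
  have hWtop : ∀ e : Submodule K V, OneDim e → ¬ e ≤ W → W ⊔ e = ⊤ := by
    intro e he hne
    apply Submodule.eq_top_of_finrank_eq
    have hlt : W < W ⊔ e := lt_of_le_of_ne le_sup_left
      (fun h => hne (h ▸ le_sup_right))
    have h1 := Submodule.finrank_lt_finrank_of_lt hlt
    have h2 : finrank K ↥(W ⊔ e) ≤ finrank K V := Submodule.finrank_le _
    omega
  -- decomposition of a line outside `W` relative to another such line
  have hdecomp : ∀ e x : Submodule K V, OneDim e → ¬ e ≤ W → OneDim x → ¬ x ≤ W →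
      x = e ∨ ∃ y : Submodule K V, OneDim y ∧ y ≤ W ∧ e ⊔ y = e ⊔ x := by
    intro e x he hneW hx hxW
    obtain ⟨v, hv0, hev⟩ := onedim_exists he
    obtain ⟨u, hu0, hxu⟩ := onedim_exists hx
    have hu_mem : u ∈ W ⊔ e := (hWtop e he hneW) ▸ Submodule.mem_top
    rcases Submodule.mem_sup.mp hu_mem with ⟨w, hwW, z, hze, huwz⟩
    rw [hev] at hze
    rcases Submodule.mem_span_singleton.mp hze with ⟨c, rfl⟩
    by_cases hw : w = 0
    · left
      subst hw
      rw [zero_add] at huwz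
      have hc : c ≠ 0 := by rintro rfl; simp at huwz; exact hu0 huwz.symm
      rw [hxu, hev, ← huwz]
      exact Submodule.span_singleton_smul_eq (IsUnit.mk0 c hc) v
    · right
      refine ⟨Submodule.span K {w}, finrank_span_singleton hw, ?_, ?_⟩
      · exact (Submodule.span_singleton_le_iff_mem _ _).mpr hwW
      · rw [hev, hxu]
        apply le_antisymm
        · refine sup_le le_sup_left ((Submodule.span_singleton_le_iff_mem _ _).mpr ?_)
          have : w = (-c) • v + u := by rw [neg_smul, ← huwz]; abel
          rw [this]
          exact Submodule.add_mem_sup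
            (Submodule.smul_mem _ _ (Submodule.mem_span_singleton_self v))
            (Submodule.mem_span_singleton_self u)
        · refine sup_le le_sup_left ((Submodule.span_singleton_le_iff_mem _ _).mpr ?_)
          rw [← huwz, add_comm]
          exact Submodule.add_mem_sup
            (Submodule.smul_mem _ _ (Submodule.mem_span_singleton_self v))
            (Submodule.mem_span_singleton_self w)
  -- absorbed lines inside W lie inside the flat
  have inW : ∀ (F : Submodule K ↥W), IsFlat rM F → ∀ y : Submodule K V, OneDim y → y ≤ W →
      rN (Submodule.map W.subtype F ⊔ y) ≤ rN (Submodule.map W.subtype F) →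
      y ≤ Submodule.map W.subtype F := by
    intro F hF y hy hyW hle
    set y' := Submodule.comap W.subtype y with hy'def
    have hmy : Submodule.map W.subtype y' = y := by
      rw [Submodule.map_comap_subtype]
      exact inf_eq_right.mpr hyW
    have hy' : OneDim y' := by
      unfold OneDim
      rw [← Submodule.finrank_map_subtype_eq W y', hmy]
      exact hy
    have hrk : rM (F ⊔ y') = rM F := by
      have h1 : rN (Submodule.map W.subtype (F ⊔ y')) =
          rN (Submodule.map W.subtype F ⊔ y) := by rw [Submodule.map_sup, hmy]
      have h2 : rM (F ⊔ y') ≤ rM F := by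
        rw [← hrest (F ⊔ y'), h1, ← hrest F]; exact hle
      exact le_antisymm h2 (hM.2.1 _ _ le_sup_left)
    have hy'F : y' ≤ F := by
      by_contra h
      exact absurd hrk (ne_of_gt (hF y' hy' h))
    calc y = Submodule.map W.subtype y' := hmy.symm
      _ ≤ Submodule.map W.subtype F := Submodule.map_mono hy'F
  -- key lemma: rank-preserving extension of a flat of M by e is a flat of N
  have key : ∀ (F : Submodule K ↥W) (e : Submodule K V), OneDim e → ¬ e ≤ W →
      IsFlat rM F →
      rN (Submodule.map W.subtype F ⊔ e) = rN (Submodule.map W.subtype F) →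
      IsFlat rN (Submodule.map W.subtype F ⊔ e) := by
    intro F e he hneW hF hrank x hx hxle
    by_contra hcon
    push_neg at hcon
    have heq : rN ((Submodule.map W.subtype F ⊔ e) ⊔ x) =
        rN (Submodule.map W.subtype F ⊔ e) :=
      le_antisymm hcon (hN.2.1 _ _ le_sup_left)
    apply hxle
    by_cases hxW : x ≤ W
    · refine le_trans (inW F hF x hx hxW ?_) le_sup_left
      calc rN (Submodule.map W.subtype F ⊔ x)
          ≤ rN ((Submodule.map W.subtype F ⊔ e) ⊔ x) :=
            hN.2.1 _ _ (sup_le (le_trans le_sup_left le_sup_left) le_sup_right)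
        _ = rN (Submodule.map W.subtype F ⊔ e) := heq
        _ = rN (Submodule.map W.subtype F) := hrank
    · rcases hdecomp e x he hneW hx hxW with rfl | ⟨y, hy1, hyW, hey⟩
      · exact le_sup_right
      · have hyF : y ≤ Submodule.map W.subtype F := by
          apply inW F hF y hy1 hyW
          calc rN (Submodule.map W.subtype F ⊔ y)
              ≤ rN ((Submodule.map W.subtype F ⊔ e) ⊔ y) :=
                hN.2.1 _ _ (sup_le (le_trans le_sup_left le_sup_left) le_sup_right)
            _ = rN ((Submodule.map W.subtype F ⊔ e) ⊔ x) := by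
                rw [sup_assoc, sup_assoc, hey]
            _ = rN (Submodule.map W.subtype F ⊔ e) := heq
            _ = rN (Submodule.map W.subtype F) := hrank
        calc x ≤ e ⊔ x := le_sup_right
          _ = e ⊔ y := hey.symm
          _ ≤ Submodule.map W.subtype F ⊔ e := sup_le le_sup_right (le_trans hyF le_sup_left)
  -- simplified membership criterion
  have hmem : ∀ (e : Delta W) (F : Submodule K ↥W), F ∈ μ e ↔
      (IsFlat rM F ∧ rN (Submodule.map W.subtype F ⊔ (e : Submodule K V)) =
        rN (Submodule.map W.subtype F)) := by
    intro e F
    rw [hμ e]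
    constructor
    · rintro ⟨h1, _, h3⟩; exact ⟨h1, h3⟩
    · rintro ⟨h1, h3⟩
      exact ⟨h1, key F e e.2.1 e.2.2 h1 h3, h3⟩
  constructor
  · -- each μ e is a modular cut
    intro e
    refine ⟨fun F hF => ((hmem e F).mp hF).1, ?_, ?_⟩
    · -- (M1)
      intro F hF F' hF' hFF'
      obtain ⟨hflat, hrank⟩ := (hmem e F).mp hF
      refine (hmem e F').mpr ⟨hF', ?_⟩
      exact rank_sup_eq_of_le hN (Submodule.map_mono hFF') hrank
    · -- (M2)
      intro F₁ hF₁ F₂ hF₂ hmp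
      obtain ⟨hflat₁, hrank₁⟩ := (hmem e F₁).mp hF₁
      obtain ⟨hflat₂, hrank₂⟩ := (hmem e F₂).mp hF₂
      refine (hmem e (F₁ ⊓ F₂)).mpr ⟨isFlat_inf hM hflat₁ hflat₂, ?_⟩
      set e' : Submodule K V := (e : Submodule K V)
      set A := Submodule.map W.subtype F₁ ⊔ e' with hA
      set B := Submodule.map W.subtype F₂ ⊔ e' with hB
      have hsub := hN.2.2 A B
      have hAB : A ⊔ B = Submodule.map W.subtype (F₁ ⊔ F₂) ⊔ e' := by
        rw [hA, hB, Submodule.map_sup]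
        rw [sup_sup_sup_comm, sup_idem]
      have h1 : rM (F₁ ⊔ F₂) ≤ rN (A ⊔ B) := by
        rw [← hrest]
        exact hN.2.1 _ _ (by rw [hAB]; exact le_sup_left)
      have h2 : rN A = rM F₁ := by rw [hA, hrank₁, hrest]
      have h3 : rN B = rM F₂ := by rw [hB, hrank₂, hrest]
      have h4 : Submodule.map W.subtype (F₁ ⊓ F₂) ⊔ e' ≤ A ⊓ B := by
        refine le_inf (sup_le ?_ le_sup_right) (sup_le ?_ le_sup_right)
        · exact le_trans (Submodule.map_mono inf_le_left) le_sup_left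
        · exact le_trans (Submodule.map_mono inf_le_right) le_sup_left
      have h5 : rN (Submodule.map W.subtype (F₁ ⊓ F₂) ⊔ e') ≤ rN (A ⊓ B) :=
        hN.2.1 _ _ h4
      have h6 : rN (Submodule.map W.subtype (F₁ ⊓ F₂)) = rM (F₁ ⊓ F₂) := hrest _
      have h7 : rN (Submodule.map W.subtype (F₁ ⊓ F₂)) ≤
          rN (Submodule.map W.subtype (F₁ ⊓ F₂) ⊔ e') := hN.2.1 _ _ le_sup_left
      have hmp' := hmp
      unfold ModularPair at hmp'
      omega
  · -- property (QM)
    intro e₁ e₂ F hF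
    obtain ⟨hflat, hrank₁⟩ := (hmem e₁ F).mp hF
    constructor
    · intro h
      refine (hmem e₂ F).mpr ⟨hflat, ?_⟩
      rw [← h]; exact hrank₁
    · intro hF₂
      obtain ⟨_, hrank₂⟩ := (hmem e₂ F).mp hF₂
      have hflatN₁ : IsFlat rN (Submodule.map W.subtype F ⊔ (e₁ : Submodule K V)) :=
        key F e₁ e₁.2.1 e₁.2.2 hflat hrank₁
      have hflatN₂ : IsFlat rN (Submodule.map W.subtype F ⊔ (e₂ : Submodule K V)) :=
        key F e₂ e₂.2.1 e₂.2.2 hflat hrank₂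
      have h12 : (e₂ : Submodule K V) ≤ Submodule.map W.subtype F ⊔ (e₁ : Submodule K V) := by
        by_contra h
        have := hflatN₁ e₂ e₂.2.1 h
        have heq : rN ((Submodule.map W.subtype F ⊔ (e₁ : Submodule K V)) ⊔ (e₂ : Submodule K V)) =
            rN (Submodule.map W.subtype F ⊔ (e₁ : Submodule K V)) :=
          rank_sup_eq_of_le hN le_sup_left hrank₂
        omega
      have h21 : (e₁ : Submodule K V) ≤ Submodule.map W.subtype F ⊔ (e₂ : Submodule K V) := by
        by_contra h
        have := hflatN₂ e₁ e₁.2.1 h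
        have heq : rN ((Submodule.map W.subtype F ⊔ (e₂ : Submodule K V)) ⊔ (e₁ : Submodule K V)) =
            rN (Submodule.map W.subtype F ⊔ (e₂ : Submodule K V)) :=
          rank_sup_eq_of_le hN le_sup_left hrank₁
        omega
      exact le_antisymm (sup_le le_sup_left h21) (sup_le le_sup_left h12)
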